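/- Let X = {a,b} and let α, β, i, j be nonnegative integers. Define morphisms g_1, g_2 : X* → X* by g_1(a) = ε, g_1(b) = (a^α b a^β)^i, g_2(a) = a, g_2(b) = (b a^{α+β})^j b. Then g_1 ∘ g_2 = g_2 ∘ g_1. -/

import Mathlib

/-- Words over the binary alphabet: `false` is the letter `a`, `true` is the letter `b`. -/
abbrev Word := List Bool

/-- The morphism of the free monoid determined by the images `g` of the letters. -/
def applyG (g : Bool → Word) (w : Word) : Word := w.flatMap g

/-- `a^n`. -/
def rep (n : ℕ) : Word := List.replicate n false

/-- `b a^{α 1} b a^{α 2} ⋯ b a^{α (p-1)} b`, a word with `p` occurrences of `b`. -/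
def blockWord (p : ℕ) (α : ℕ → ℕ) : Word :=
  ((List.range (p - 1)).flatMap fun i => true :: rep (α (i + 1))) ++ [true]

/-- `w^k`. -/
def wordPow (w : Word) (k : ℕ) : Word := (List.replicate k w).flatten

/-- `u` and `v` are `a`-conjugates. -/
def AConj (u v : Word) : Prop :=
  ∃ p q r s : ℕ, ∃ w : Word,
    u = rep p ++ w ++ rep q ∧ v = rep r ++ w ++ rep s ∧ p + q = r + s

/-- `w` is the infinite word `ω(g)`: for every `n`, the word obtained from `g^n(b)` by deleting
all occurrences of `a` preceding the first occurrence of `b` is a prefix of `w`. -/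
def IsOmega (g : Bool → Word) (w : ℕ → Bool) : Prop :=
  ∀ n k : ℕ, ∀ hk : k < (((applyG g)^[n] [true]).dropWhile (fun x => !x)).length,
    (((applyG g)^[n] [true]).dropWhile (fun x => !x)).get ⟨k, hk⟩ = w k

/-- `Aw w i` (for `i ≥ 1`): the number of occurrences of `a` in `w` strictly between the
`i`-th and `(i+1)`-th occurrences of `b` in `w`. -/
noncomputable def Aw (w : ℕ → Bool) (i : ℕ) : ℕ :=
  Nat.nth (fun n => w n = true) i - Nat.nth (fun n => w n = true) (i - 1) - 1

/-! With `u = a^α b a^β`, the identity `x (y x)^j y = (x y)^(j+1)` for `x = a^α`, `y = b a^β`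
gives `g₂(u) = u^(j+1)`, since `g₂` fixes `a`. Hence both composites send `a` to `ε` and `b`
to a power of `u`: `g₁(g₂(b)) = g₁(b)^(j+1) = (u^i)^(j+1)` because `g₁` erases `a`, and
`g₂(g₁(b)) = g₂(u)^i = (u^(j+1))^i`. Two morphisms agreeing on the letters are equal. -/

lemma applyG_append (g : Bool → Word) (x y : Word) :
    applyG g (x ++ y) = applyG g x ++ applyG g y :=
  List.flatMap_append

lemma applyG_singleton (g : Bool → Word) (x : Bool) : applyG g [x] = g x := by
  simp [applyG]

lemma applyG_comp_applyG (f g : Bool → Word) :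
    applyG f ∘ applyG g = applyG (applyG f ∘ g) := by
  funext w
  exact List.flatMap_assoc

lemma applyG_comm_of_forall {f g : Bool → Word} (h : ∀ x, applyG f (g x) = applyG g (f x)) :
    applyG f ∘ applyG g = applyG g ∘ applyG f := by
  rw [applyG_comp_applyG, applyG_comp_applyG]
  exact congrArg applyG (funext h)

lemma applyG_rep_of_eq_nil {g : Bool → Word} (h : g false = []) (n : ℕ) :
    applyG g (rep n) = [] := by
  simp [applyG, rep, h]

lemma applyG_rep_of_eq_singleton {g : Bool → Word} (h : g false = [false]) (n : ℕ) :
    applyG g (rep n) = rep n := by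
  induction n with
  | zero => rfl
  | succ n ih => simpa [applyG, rep, List.replicate_succ, h] using ih

lemma rep_add (m n : ℕ) : rep (m + n) = rep m ++ rep n :=
  List.replicate_add m n false

lemma wordPow_add (w : Word) (m n : ℕ) :
    wordPow w (m + n) = wordPow w m ++ wordPow w n := by
  rw [wordPow, List.replicate_add, List.flatten_append]; rfl

lemma wordPow_succ' (w : Word) (k : ℕ) : wordPow w (k + 1) = wordPow w k ++ w := by
  rw [wordPow_add]; simp [wordPow]

lemma wordPow_wordPow (w : Word) (m n : ℕ) :
    wordPow (wordPow w m) n = wordPow w (m * n) := by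
  induction n with
  | zero => rfl
  | succ n ih => rw [wordPow_succ', ih, Nat.mul_succ, wordPow_add]

lemma wordPow_wordPow_comm (w : Word) (m n : ℕ) :
    wordPow (wordPow w m) n = wordPow (wordPow w n) m := by
  rw [wordPow_wordPow, wordPow_wordPow, Nat.mul_comm]

lemma applyG_wordPow (g : Bool → Word) (w : Word) (k : ℕ) :
    applyG g (wordPow w k) = wordPow (applyG g w) k := by
  induction k with
  | zero => rfl
  | succ k ih => rw [wordPow_succ', applyG_append, ih, wordPow_succ']

lemma append_wordPow_append_comm (x y : Word) (k : ℕ) :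
    x ++ wordPow (y ++ x) k = wordPow (x ++ y) k ++ x := by
  induction k with
  | zero => simp [wordPow]
  | succ k ih => simp only [wordPow_succ', ← List.append_assoc, ih]

lemma append_wordPow_append_append (x y : Word) (k : ℕ) :
    x ++ wordPow (y ++ x) k ++ y = wordPow (x ++ y) (k + 1) := by
  rw [append_wordPow_append_comm, List.append_assoc, wordPow_succ']

/-- `g₁(a)=ε`, `g₁(b)=(a^α b a^β)^i`, `g₂(a)=a`, `g₂(b)=(b a^{α+β})^j b`
commute. -/
theorem stmt5 (α β i j : ℕ) (g₁ g₂ : Bool → Word)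
    (h₁a : g₁ false = [])
    (h₁b : g₁ true = wordPow (rep α ++ [true] ++ rep β) i)
    (h₂a : g₂ false = [false])
    (h₂b : g₂ true = wordPow ([true] ++ rep (α + β)) j ++ [true]) :
    applyG g₁ ∘ applyG g₂ = applyG g₂ ∘ applyG g₁ := by
  set u := rep α ++ [true] ++ rep β
  have hu : applyG g₂ u = wordPow u (j + 1) := by
    rw [applyG_append, applyG_append, applyG_singleton, h₂b, applyG_rep_of_eq_singleton h₂a,
      applyG_rep_of_eq_singleton h₂a, Nat.add_comm, rep_add]
    simpa only [u, List.append_assoc] using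
      append_wordPow_append_append (rep α) ([true] ++ rep β) j
  have hb : applyG g₁ (g₂ true) = applyG g₂ (g₁ true) :=
    calc applyG g₁ (g₂ true) = wordPow (g₁ true) (j + 1) := by
          rw [h₂b, applyG_append, applyG_wordPow, applyG_append, applyG_singleton,
            applyG_rep_of_eq_nil h₁a, List.append_nil, wordPow_succ']
      _ = wordPow (wordPow u (j + 1)) i := by rw [h₁b, wordPow_wordPow_comm]
      _ = applyG g₂ (g₁ true) := by rw [h₁b, applyG_wordPow, hu]
  have ha : applyG g₁ (g₂ false) = applyG g₂ (g₁ false) := by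
    rw [h₂a, applyG_singleton, h₁a]
    rfl
  exact applyG_comm_of_forall (Bool.forall_bool.2 ⟨ha, hb⟩)
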